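/- Let ν be a probability measure on [0,∞), α > 0, n ≥ 2 an integer, and set G(t) = (Φ_ν(t))^n. Let F_n denote the cumulative distribution function of the n-fold Kendall convolution power ν^{△_α n}. Then for every x > 0 at which the map x ↦ G(1/x) is differentiable and F_n is continuous, F_n(x) = G(1/x) + (x/α) · (d/dx)[G(1/x)]. -/

import Mathlib

open MeasureTheory Set

/-- The Pareto probability measure `π_{2α}` on `ℝ`, with density
`2α x^(-(2α+1)) 1_{(1,∞)}(x)` with respect to Lebesgue measure. -/
noncomputable def pareto (α : ℝ) : Measure ℝ :=
  volume.withDensity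
    (fun x => ENNReal.ofReal (if 1 < x then 2 * α * x ^ (-(2 * α) - 1) else 0))

/-- The Kendall probability kernel `ρ_{a,b} = (1 - (a/b)^α) δ_b + (a/b)^α T_b π_{2α}`
for `0 ≤ a ≤ b` (with `ρ_{0,0} = δ_0`). -/
noncomputable def kendallKernelLe (α a b : ℝ) : Measure ℝ :=
  if b = 0 then Measure.dirac 0
  else ENNReal.ofReal (1 - (a / b) ^ α) • Measure.dirac b
      + ENNReal.ofReal ((a / b) ^ α) • Measure.map (fun x => b * x) (pareto α)

/-- The Kendall kernel `ρ_{x,y}`, extended symmetrically. -/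
noncomputable def kendallKernel (α x y : ℝ) : Measure ℝ :=
  kendallKernelLe α (min x y) (max x y)

/-- The Kendall convolution `λ △_α ν`, defined by
`(λ △_α ν)(A) = ∫∫ ρ_{x,y}(A) λ(dx) ν(dy)`. -/
noncomputable def kendallConv (α : ℝ) (lam ν : Measure ℝ) : Measure ℝ :=
  lam.bind (fun x => ν.bind (fun y => kendallKernel α x y))

/-- The `n`-fold Kendall convolution power `ν^{△_α n}`, with `ν^{△_α 0} = δ_0`. -/
noncomputable def kendallPow (α : ℝ) (ν : Measure ℝ) : ℕ → Measure ℝ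
  | 0 => Measure.dirac 0
  | n + 1 => kendallConv α (kendallPow α ν n) ν

/-- The Kendall–Williamson transform `Φ_ν(t) = ∫ (1 - (t s)^α)_+ ν(ds)`. -/
noncomputable def williamson (α : ℝ) (ν : Measure ℝ) (t : ℝ) : ℝ :=
  ∫ s, max (1 - (t * s) ^ α) 0 ∂ν

/-!
The Williamson kernel `(1 - (t s)^α)₊` is multiplicative under the Kendall kernel,
`∫ (1 - (t s)^α)₊ ρ_{a,b}(ds) = (1 - (t a)^α)₊ (1 - (t b)^α)₊` (for the Pareto part this is
an explicit integral), hence `Φ_{ν^{△n}} = Φ_ν^n`. For a measure `μ` on `[0, ∞)` with cdf `F`,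
`y^α Φ_μ(1/y) = ∫ (y^α - s^α)₊ μ(ds)`, and the increment of the right-hand side over `[u, v]`
lies between `(v^α - u^α) F(u)` and `(v^α - u^α) F(v)`. So at a continuity point `x` of `F` its
derivative is `α x^(α-1) F(x)`; comparing with the product rule for `y^α Φ_μ(1/y)` gives the
formula.
-/

open Filter Topology
open scoped ENNReal

noncomputable def williamsonKernel (α t s : ℝ) : ℝ := max (1 - (t * s) ^ α) 0

section WilliamsonKernel

variable {α : ℝ}

lemma williamsonKernel_nonneg (t s : ℝ) : 0 ≤ williamsonKernel α t s := le_max_right _ _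

@[fun_prop]
lemma measurable_williamsonKernel (t : ℝ) : Measurable (williamsonKernel α t) := by
  unfold williamsonKernel; fun_prop

lemma williamsonKernel_zero_left (hα : α ≠ 0) (s : ℝ) : williamsonKernel α 0 s = 1 := by
  simp [williamsonKernel, Real.zero_rpow hα]

lemma williamsonKernel_zero_right (hα : α ≠ 0) (t : ℝ) : williamsonKernel α t 0 = 1 := by
  simp [williamsonKernel, Real.zero_rpow hα]

end WilliamsonKernel

lemma hasDerivAt_max_zero_sq (y : ℝ) :
    HasDerivAt (fun z : ℝ => max z 0 ^ 2) (2 * max y 0) y := by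
  refine hasDerivAt_of_hasDerivAt_of_ne' (f := fun z : ℝ => max z 0 ^ 2)
    (g := fun z => 2 * max z 0) (x := 0) (fun z hz => ?_) (by fun_prop) (by fun_prop) y
  rcases hz.lt_or_gt with hz | hz
  · rw [max_eq_right hz.le, mul_zero]
    refine (hasDerivAt_const z (0 : ℝ)).congr_of_eventuallyEq ?_
    filter_upwards [gt_mem_nhds hz] with w hw
    simp [max_eq_right hw.le]
  · rw [max_eq_left hz.le]
    refine ((hasDerivAt_pow 2 z).congr_of_eventuallyEq ?_).congr_deriv (by ring)
    filter_upwards [lt_mem_nhds hz] with w hw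
    simp [max_eq_left hw.le]

section Pareto

variable {α : ℝ}

instance (α : ℝ) : SFinite (pareto α) := by
  unfold pareto; infer_instance

lemma pareto_Iio_zero : pareto α (Iio 0) = 0 := by
  rw [pareto, withDensity_apply _ measurableSet_Iio, setLIntegral_congr_fun (g := fun _ => 0)
    measurableSet_Iio fun x (hx : x < 0) => by rw [if_neg (by linarith), ENNReal.ofReal_zero]]
  exact lintegral_zero

lemma hasDerivAt_max_rpow_neg_sub_sq {C x : ℝ} (hx : 0 < x) :
    HasDerivAt (fun y => max (y ^ (-α) - C) 0 ^ 2)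
      (-(2 * α * x ^ (-α - 1) * max (x ^ (-α) - C) 0)) x :=
  ((hasDerivAt_max_zero_sq _).comp x
    ((Real.hasDerivAt_rpow_const (Or.inl hx.ne')).sub_const C)).congr_deriv (by ring)

lemma rpow_mul_williamsonKernel {c x : ℝ} (hc : 0 ≤ c) (hx : 0 < x) :
    x ^ (-(2 * α) - 1) * williamsonKernel α c x = x ^ (-α - 1) * max (x ^ (-α) - c ^ α) 0 := by
  have hxα : x ^ (-α) * x ^ α = 1 := by rw [← Real.rpow_add hx]; simp
  have hpow : x ^ (-(2 * α) - 1) = x ^ (-α - 1) * x ^ (-α) := by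
    rw [← Real.rpow_add hx]; ring_nf
  rw [williamsonKernel, hpow, Real.mul_rpow hc hx.le, mul_assoc,
    mul_max_of_nonneg _ _ (by positivity), mul_zero]
  congr 2
  linear_combination (-c ^ α) * hxα

/-- `x ↦ -(x^(-α) - c^α)₊²` is an antiderivative of the Pareto density times
`(1 - (c x)^α)₊`. -/
lemma lintegral_williamsonKernel_pareto (hα : 0 < α) {c : ℝ} (hc : 0 ≤ c) :
    ∫⁻ x, ENNReal.ofReal (williamsonKernel α c x) ∂pareto α
      = ENNReal.ofReal (williamsonKernel α c 1 ^ 2) := by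
  set g : ℝ → ℝ := fun x => 2 * α * x ^ (-α - 1) * max (x ^ (-α) - c ^ α) 0 with hg_def
  have hG : ∀ x ∈ Ici (1 : ℝ),
      HasDerivAt (fun y => -max (y ^ (-α) - c ^ α) 0 ^ 2) (g x) x := fun x (hx : 1 ≤ x) =>
    (hasDerivAt_max_rpow_neg_sub_sq (by positivity)).neg.congr_deriv (neg_neg _)
  have hg : ∀ x ∈ Ioi (1 : ℝ), 0 ≤ g x := fun x (hx : 1 < x) => by
    simp only [g]; positivity
  have hlim : Tendsto (fun y => -max (y ^ (-α) - c ^ α) 0 ^ 2) atTop (𝓝 0) := by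
    have h := (((tendsto_rpow_neg_atTop hα).sub_const (c ^ α)).max
      (tendsto_const_nhds (x := (0 : ℝ)))).pow 2 |>.neg
    simpa [max_eq_right (neg_nonpos.2 (by positivity : 0 ≤ c ^ α))] using h
  have hdens : ∀ x, ENNReal.ofReal (if 1 < x then 2 * α * x ^ (-(2 * α) - 1) else 0)
      * ENNReal.ofReal (williamsonKernel α c x)
        = (Ioi 1).indicator (fun x => ENNReal.ofReal (g x)) x := by
    intro x
    by_cases hx : 1 < x
    · rw [if_pos hx, indicator_of_mem (show x ∈ Ioi 1 from hx),
        ← ENNReal.ofReal_mul (by positivity), mul_assoc,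
        rpow_mul_williamsonKernel hc (by positivity)]
      simp only [hg_def, mul_assoc]
    · rw [if_neg hx, indicator_of_notMem (show x ∉ Ioi 1 from hx)]
      simp
  have hdm : Measurable fun x : ℝ =>
      ENNReal.ofReal (if 1 < x then 2 * α * x ^ (-(2 * α) - 1) else 0) :=
    (Measurable.ite measurableSet_Ioi (by fun_prop) measurable_const).ennreal_ofReal
  rw [pareto, lintegral_withDensity_eq_lintegral_mul _ hdm (by fun_prop)]
  simp only [Pi.mul_apply, hdens]
  rw [lintegral_indicator measurableSet_Ioi, ← ofReal_integral_eq_lintegral_ofReal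
      (integrableOn_Ioi_deriv_of_nonneg' hG hg hlim) _]
  · rw [integral_Ioi_of_hasDerivAt_of_nonneg' hG hg hlim]
    simp [williamsonKernel]
  · exact (ae_restrict_iff' measurableSet_Ioi).2 (ae_of_all _ hg)

end Pareto

lemma measurable_map_const_mul {M : Type*} [MeasurableSpace M] [Mul M] [MeasurableMul₂ M]
    (μ : Measure M) [SFinite μ] : Measurable fun b : M => μ.map (b * ·) := by
  refine Measure.measurable_of_measurable_coe _ fun s hs => ?_
  have h : ∀ b, μ.map (b * ·) s = μ (Prod.mk b ⁻¹' {p : M × M | p.1 * p.2 ∈ s}) :=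
    fun b => Measure.map_apply (measurable_const_mul b) hs
  simp_rw [h]
  exact measurable_measure_prodMk_left (hs.preimage (measurable_fst.mul measurable_snd))

lemma measurable_bind_of_measurable_uncurry {X Y Z : Type*} [MeasurableSpace X]
    [MeasurableSpace Y] [MeasurableSpace Z] {κ : X → Y → Measure Z}
    (hκ : Measurable (Function.uncurry κ)) (ν : Measure Y) [SFinite ν] :
    Measurable fun x => ν.bind (κ x) := by
  refine Measure.measurable_of_measurable_coe _ fun s hs => ?_
  have h : ∀ x, ν.bind (κ x) s = ∫⁻ y, κ x y s ∂ν :=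
    fun x => Measure.bind_apply hs (hκ.comp measurable_prodMk_left).aemeasurable
  simp_rw [h]
  exact ((Measure.measurable_coe hs).comp hκ).lintegral_prod_right'

lemma ae_le_of_measure_Iio_eq_zero {X : Type*} [MeasurableSpace X] [LinearOrder X]
    {μ : Measure X} {a : X} (h : μ (Iio a) = 0) : ∀ᵐ x ∂μ, a ≤ x :=
  ae_iff.2 (measure_mono_null (fun _ => not_le.1) h)

section KendallKernel

variable {α : ℝ}

lemma kendallKernelLe_Iio_zero {a b : ℝ} (hb : 0 ≤ b) : kendallKernelLe α a b (Iio 0) = 0 := by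
  rw [kendallKernelLe]
  split_ifs with hb0
  · simp
  · have hb0 : 0 < b := lt_of_le_of_ne hb (Ne.symm hb0)
    rw [Measure.add_apply, Measure.smul_apply, Measure.smul_apply,
      Measure.map_apply (measurable_const_mul b) measurableSet_Iio, preimage_const_mul_Iio₀ _ hb0,
      zero_div, pareto_Iio_zero]
    simp [hb]

lemma lintegral_williamsonKernel_kendallKernelLe (hα : 0 < α) {a b t : ℝ} (ha : 0 ≤ a)
    (hab : a ≤ b) (ht : 0 ≤ t) :
    ∫⁻ s, ENNReal.ofReal (williamsonKernel α t s) ∂kendallKernelLe α a b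
      = ENNReal.ofReal (williamsonKernel α t a) * ENNReal.ofReal (williamsonKernel α t b) := by
  have hW := (measurable_williamsonKernel (α := α) t).ennreal_ofReal
  rcases (ha.trans hab).eq_or_lt with rfl | hb
  · obtain rfl : a = 0 := le_antisymm hab ha
    simp [kendallKernelLe, lintegral_dirac' _ hW, williamsonKernel_zero_right hα.ne']
  set q := (a / b) ^ α with hq
  have hq0 : 0 ≤ q := by positivity
  have hq1 : q ≤ 1 := Real.rpow_le_one (by positivity) ((div_le_one hb).2 hab) hα.le
  have hpareto : ∫⁻ x, ENNReal.ofReal (williamsonKernel α t (b * x)) ∂pareto α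
      = ENNReal.ofReal (williamsonKernel α t b ^ 2) := by
    simpa [williamsonKernel, mul_assoc] using
      lintegral_williamsonKernel_pareto hα (mul_nonneg ht hb.le)
  have hmix : (1 - q) * williamsonKernel α t b + q * williamsonKernel α t b ^ 2
      = williamsonKernel α t a * williamsonKernel α t b := by
    have hB : 0 ≤ (t * b) ^ α := by positivity
    have hWa : williamsonKernel α t a = max (1 - q * (t * b) ^ α) 0 := by
      rw [williamsonKernel, hq, ← Real.mul_rpow (by positivity) (by positivity)]
      congr 3
      field_simp
    rw [hWa, williamsonKernel]
    rcases le_total ((t * b) ^ α) 1 with hB1 | hB1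
    · rw [max_eq_left (by linarith), max_eq_left (by nlinarith)]
      ring
    · rw [max_eq_right (by linarith)]
      ring
  have hWb := williamsonKernel_nonneg (α := α) t b
  rw [kendallKernelLe, if_neg hb.ne', lintegral_add_measure, lintegral_smul_measure,
    lintegral_smul_measure, lintegral_dirac' _ hW, lintegral_map hW (measurable_const_mul b),
    hpareto, smul_eq_mul, smul_eq_mul, ← ENNReal.ofReal_mul (williamsonKernel_nonneg _ _),
    ← hmix,
    ENNReal.ofReal_add (mul_nonneg (by linarith) hWb) (by positivity),
    ENNReal.ofReal_mul (by linarith), ENNReal.ofReal_mul hq0]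

lemma kendallKernel_Iio_zero {x y : ℝ} (hy : 0 ≤ y) : kendallKernel α x y (Iio 0) = 0 :=
  kendallKernelLe_Iio_zero (le_max_of_le_right hy)

lemma lintegral_williamsonKernel_kendallKernel (hα : 0 < α) {x y t : ℝ} (hx : 0 ≤ x)
    (hy : 0 ≤ y) (ht : 0 ≤ t) :
    ∫⁻ s, ENNReal.ofReal (williamsonKernel α t s) ∂kendallKernel α x y
      = ENNReal.ofReal (williamsonKernel α t x) * ENNReal.ofReal (williamsonKernel α t y) := by
  rw [kendallKernel, lintegral_williamsonKernel_kendallKernelLe hα (le_min hx hy) min_le_max ht]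
  rcases le_total x y with h | h
  · rw [min_eq_left h, max_eq_right h]
  · rw [min_eq_right h, max_eq_left h, mul_comm]

lemma measurable_kendallKernelLe : Measurable (Function.uncurry (kendallKernelLe α)) := by
  refine Measure.measurable_of_measurable_coe _ fun s hs => ?_
  have h : ∀ p : ℝ × ℝ, Function.uncurry (kendallKernelLe α) p s =
      if p.2 = 0 then Measure.dirac 0 s
      else ENNReal.ofReal (1 - (p.1 / p.2) ^ α) * Measure.dirac p.2 s
        + ENNReal.ofReal ((p.1 / p.2) ^ α) * (pareto α).map (p.2 * ·) s := fun p => by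
    simp only [Function.uncurry, kendallKernelLe]
    split_ifs <;> simp
  simp_rw [h]
  refine Measurable.ite (measurableSet_eq_fun measurable_snd measurable_const) measurable_const ?_
  refine (Measurable.mul ?_ ?_).add (Measurable.mul ?_ ?_)
  · fun_prop
  · exact (Measure.measurable_coe hs).comp (Measure.measurable_dirac.comp measurable_snd)
  · fun_prop
  · exact (Measure.measurable_coe hs).comp ((measurable_map_const_mul _).comp measurable_snd)

lemma measurable_kendallKernel : Measurable (Function.uncurry (kendallKernel α)) :=
  measurable_kendallKernelLe.comp ((measurable_fst.min measurable_snd).prodMk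
    (measurable_fst.max measurable_snd))

end KendallKernel

section KendallConv

variable {α : ℝ} {ν : Measure ℝ} [SFinite ν]

lemma lintegral_kendallConv (lam : Measure ℝ) {f : ℝ → ℝ≥0∞} (hf : Measurable f) :
    ∫⁻ s, f s ∂kendallConv α lam ν
      = ∫⁻ x, ∫⁻ y, ∫⁻ s, f s ∂kendallKernel α x y ∂ν ∂lam := by
  rw [kendallConv, Measure.lintegral_bind
    (measurable_bind_of_measurable_uncurry measurable_kendallKernel ν).aemeasurable
    hf.aemeasurable]
  refine lintegral_congr fun x => ?_
  exact Measure.lintegral_bind (measurable_kendallKernel.comp measurable_prodMk_left).aemeasurable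
    hf.aemeasurable

lemma kendallConv_Iio_zero (lam : Measure ℝ) (hν : ∀ᵐ y ∂ν, 0 ≤ y) :
    kendallConv α lam ν (Iio 0) = 0 := by
  have h : ∀ x, ∫⁻ y, kendallKernel α x y (Iio 0) ∂ν = 0 := fun x =>
    (lintegral_congr_ae (hν.mono fun y hy => kendallKernel_Iio_zero hy)).trans lintegral_zero
  rw [← lintegral_indicator_one measurableSet_Iio,
    lintegral_kendallConv _ (measurable_one.indicator measurableSet_Iio)]
  simp_rw [lintegral_indicator_one measurableSet_Iio, h, lintegral_zero]

lemma lintegral_williamsonKernel_kendallConv (hα : 0 < α) {lam : Measure ℝ}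
    (hlam : ∀ᵐ x ∂lam, 0 ≤ x) (hν : ∀ᵐ y ∂ν, 0 ≤ y) {t : ℝ} (ht : 0 ≤ t) :
    ∫⁻ s, ENNReal.ofReal (williamsonKernel α t s) ∂kendallConv α lam ν
      = (∫⁻ s, ENNReal.ofReal (williamsonKernel α t s) ∂lam)
        * ∫⁻ s, ENNReal.ofReal (williamsonKernel α t s) ∂ν := by
  have hW := (measurable_williamsonKernel (α := α) t).ennreal_ofReal
  rw [lintegral_kendallConv _ hW, ← lintegral_mul_const _ hW]
  refine lintegral_congr_ae (hlam.mono fun x hx => ?_)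
  dsimp only
  rw [← lintegral_const_mul _ hW]
  exact lintegral_congr_ae
    (hν.mono fun y hy => lintegral_williamsonKernel_kendallKernel hα hx hy ht)

end KendallConv

lemma williamson_eq_toReal_lintegral (α : ℝ) (μ : Measure ℝ) (t : ℝ) :
    williamson α μ t = (∫⁻ s, ENNReal.ofReal (williamsonKernel α t s) ∂μ).toReal :=
  integral_eq_lintegral_of_nonneg_ae (ae_of_all _ (williamsonKernel_nonneg t))
    (measurable_williamsonKernel t).aestronglyMeasurable

section KendallPow

variable {α : ℝ} {ν : Measure ℝ}

lemma kendallPow_Iio_zero [SFinite ν] (hν : ν (Iio 0) = 0) :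
    ∀ n, kendallPow α ν n (Iio 0) = 0
  | 0 => by simp [kendallPow]
  | _ + 1 => kendallConv_Iio_zero _ (ae_le_of_measure_Iio_eq_zero hν)

lemma lintegral_williamsonKernel_kendallPow [SFinite ν] (hα : 0 < α) (hν : ν (Iio 0) = 0)
    {t : ℝ} (ht : 0 ≤ t) :
    ∀ n, ∫⁻ s, ENNReal.ofReal (williamsonKernel α t s) ∂kendallPow α ν n
      = (∫⁻ s, ENNReal.ofReal (williamsonKernel α t s) ∂ν) ^ n
  | 0 => by
    simp [kendallPow, lintegral_dirac' _ (measurable_williamsonKernel t).ennreal_ofReal,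
      williamsonKernel_zero_right hα.ne']
  | n + 1 => by
    rw [kendallPow, lintegral_williamsonKernel_kendallConv hα
      (ae_le_of_measure_Iio_eq_zero (kendallPow_Iio_zero hν n))
      (ae_le_of_measure_Iio_eq_zero hν) ht,
      lintegral_williamsonKernel_kendallPow hα hν ht n, pow_succ]

lemma williamson_kendallPow [SFinite ν] (hα : 0 < α) (hν : ν (Iio 0) = 0) {t : ℝ}
    (ht : 0 ≤ t) (n : ℕ) : williamson α (kendallPow α ν n) t = williamson α ν t ^ n := by
  rw [williamson_eq_toReal_lintegral, williamson_eq_toReal_lintegral,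
    lintegral_williamsonKernel_kendallPow hα hν ht, ENNReal.toReal_pow]

/-- At `t = 0` the transform is the total mass. -/
lemma isProbabilityMeasure_kendallPow [IsProbabilityMeasure ν] (hα : 0 < α)
    (hν : ν (Iio 0) = 0) (n : ℕ) : IsProbabilityMeasure (kendallPow α ν n) := by
  have h := lintegral_williamsonKernel_kendallPow hα hν le_rfl n
  simp only [williamsonKernel_zero_left hα.ne', ENNReal.ofReal_one, lintegral_one, measure_univ,
    one_pow] at h
  exact ⟨h⟩

end KendallPow

lemma hasDerivAt_of_increment_bounds {φ F L : ℝ → ℝ} {x φ' : ℝ} {s : Set ℝ} (hs : s ∈ 𝓝 x)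
    (hφ : HasDerivAt φ φ' x) (hF : ContinuousAt F x)
    (hL : ∀ u ∈ s, ∀ v ∈ s, u < v →
      (φ v - φ u) * F u ≤ L v - L u ∧ L v - L u ≤ (φ v - φ u) * F v) :
    HasDerivAt L (φ' * F x) x := by
  have hmem : ∀ᶠ y in 𝓝[≠] x,
      slope L x y ∈ uIcc (slope φ x y * F x) (slope φ x y * F y) := by
    filter_upwards [nhdsWithin_le_nhds hs, self_mem_nhdsWithin] with y hy (hyx : y ≠ x)
    rcases hyx.lt_or_gt with h | h
    · obtain ⟨h₁, h₂⟩ := hL y hy x (mem_of_mem_nhds hs) h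
      have hd : 0 ≤ x - y := by linarith
      rw [slope_comm L, slope_comm φ, slope_def_field, slope_def_field, div_mul_eq_mul_div,
        div_mul_eq_mul_div, mem_uIcc]
      exact Or.inr ⟨div_le_div_of_nonneg_right h₁ hd, div_le_div_of_nonneg_right h₂ hd⟩
    · obtain ⟨h₁, h₂⟩ := hL x (mem_of_mem_nhds hs) y hy h
      have hd : 0 ≤ y - x := by linarith
      rw [slope_def_field, slope_def_field, div_mul_eq_mul_div, div_mul_eq_mul_div, mem_uIcc]
      exact Or.inl ⟨div_le_div_of_nonneg_right h₁ hd, div_le_div_of_nonneg_right h₂ hd⟩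
  have hφ' := hasDerivAt_iff_tendsto_slope.mp hφ
  have hF' : Tendsto F (𝓝[≠] x) (𝓝 (F x)) := hF.tendsto.mono_left nhdsWithin_le_nhds
  have hlo := (hφ'.mul_const (F x)).min (hφ'.mul hF')
  have hhi := (hφ'.mul_const (F x)).max (hφ'.mul hF')
  rw [min_self] at hlo
  rw [max_self] at hhi
  exact hasDerivAt_iff_tendsto_slope.mpr (tendsto_of_tendsto_of_tendsto_of_le_of_le' hlo hhi
    (hmem.mono fun _ h => h.1) (hmem.mono fun _ h => h.2))

section Cdf

variable {μ : Measure ℝ} {α : ℝ}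

lemma integrable_max_rpow_sub [IsFiniteMeasure μ] (hμ : ∀ᵐ s ∂μ, 0 ≤ s) (y : ℝ) :
    Integrable (fun s => max (y ^ α - s ^ α) 0) μ := by
  refine (integrable_const (max (y ^ α) 0)).mono' (by fun_prop) (hμ.mono fun s hs => ?_)
  rw [Real.norm_of_nonneg (le_max_right _ _)]
  exact max_le_max (by linarith [Real.rpow_nonneg hs α]) le_rfl

lemma rpow_mul_williamson_one_div (hμ : ∀ᵐ s ∂μ, 0 ≤ s) {y : ℝ} (hy : 0 < y) :
    y ^ α * williamson α μ (1 / y) = ∫ s, max (y ^ α - s ^ α) 0 ∂μ := by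
  rw [williamson, ← integral_const_mul]
  refine integral_congr_ae (hμ.mono fun s hs => ?_)
  dsimp only
  have hyα : 0 < y ^ α := by positivity
  rw [mul_max_of_nonneg _ _ hyα.le, mul_zero, one_div_mul_eq_div, Real.div_rpow hs hy.le, mul_sub,
    mul_one, mul_div_cancel₀ _ hyα.ne']

lemma integral_max_rpow_sub_increment_bounds [IsFiniteMeasure μ] (hμ : ∀ᵐ s ∂μ, 0 ≤ s)
    (hα : 0 ≤ α) {u v : ℝ} (hu : 0 ≤ u) (huv : u ≤ v) :
    (v ^ α - u ^ α) * μ.real (Iic u)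
        ≤ ∫ s, max (v ^ α - s ^ α) 0 ∂μ - ∫ s, max (u ^ α - s ^ α) 0 ∂μ ∧
      ∫ s, max (v ^ α - s ^ α) 0 ∂μ - ∫ s, max (u ^ α - s ^ α) 0 ∂μ
        ≤ (v ^ α - u ^ α) * μ.real (Iic v) := by
  have hmono : ∀ {a b : ℝ}, 0 ≤ a → a ≤ b → a ^ α ≤ b ^ α := fun ha hab =>
    Real.rpow_le_rpow ha hab hα
  have huv' := hmono hu huv
  have hind : ∀ w, (v ^ α - u ^ α) * μ.real (Iic w)
      = ∫ s, (Iic w).indicator (fun _ => v ^ α - u ^ α) s ∂μ := fun w => by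
    rw [integral_indicator_const _ measurableSet_Iic, smul_eq_mul, mul_comm]
  have hIv := integrable_max_rpow_sub (α := α) hμ v
  have hIu := integrable_max_rpow_sub (α := α) hμ u
  rw [← integral_sub hIv hIu, hind, hind]
  constructor
  · refine integral_mono_ae ((integrable_const _).indicator measurableSet_Iic) (hIv.sub hIu)
      (hμ.mono fun s hs => ?_)
    dsimp only
    by_cases hsu : s ≤ u
    · have := hmono hs hsu
      rw [indicator_of_mem (show s ∈ Iic u from hsu), max_eq_left (by linarith),
        max_eq_left (by linarith)]
      linarith
    · rw [indicator_of_notMem (show s ∉ Iic u from hsu)]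
      exact sub_nonneg.2 (max_le_max (by linarith) le_rfl)
  · refine integral_mono_ae (hIv.sub hIu) ((integrable_const _).indicator measurableSet_Iic)
      (hμ.mono fun s hs => ?_)
    dsimp only
    by_cases hsv : s ≤ v
    · rw [indicator_of_mem (show s ∈ Iic v from hsv)]
      refine (le_abs_self _).trans ((abs_max_sub_max_le_abs _ _ _).trans ?_)
      rw [sub_sub_sub_cancel_right, abs_of_nonneg (by linarith)]
    · have := hmono (hu.trans huv) (le_of_not_ge hsv)
      rw [indicator_of_notMem (show s ∉ Iic v from hsv), max_eq_right (by linarith)]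
      linarith [le_max_right (u ^ α - s ^ α) 0]

theorem measureReal_Iic_eq_williamson_add_mul_deriv [IsFiniteMeasure μ]
    (hμ : ∀ᵐ s ∂μ, 0 ≤ s) (hα : 0 < α) {x g' : ℝ} (hx : 0 < x)
    (hW : HasDerivAt (fun y => williamson α μ (1 / y)) g' x)
    (hF : ContinuousAt (fun y => μ.real (Iic y)) x) :
    μ.real (Iic x) = williamson α μ (1 / x) + x / α * g' := by
  have hrpow := Real.hasDerivAt_rpow_const (p := α) (Or.inl hx.ne')
  have hL₁ : HasDerivAt (fun y => ∫ s, max (y ^ α - s ^ α) 0 ∂μ)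
      (α * x ^ (α - 1) * williamson α μ (1 / x) + x ^ α * g') x :=
    (hrpow.mul hW).congr_of_eventuallyEq (by
      filter_upwards [lt_mem_nhds hx] with y hy using (rpow_mul_williamson_one_div hμ hy).symm)
  have hL₂ : HasDerivAt (fun y => ∫ s, max (y ^ α - s ^ α) 0 ∂μ)
      (α * x ^ (α - 1) * μ.real (Iic x)) x :=
    hasDerivAt_of_increment_bounds (Ioi_mem_nhds hx) hrpow hF
      fun u hu v _ huv => integral_max_rpow_sub_increment_bounds hμ hα.le (le_of_lt hu) huv.le
  have h := hL₂.unique hL₁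
  have hxα : x ^ α = x ^ (α - 1) * x := by rw [← Real.rpow_add_one hx.ne', sub_add_cancel]
  rw [hxα] at h
  have : 0 < α * x ^ (α - 1) := by positivity
  apply mul_left_cancel₀ this.ne'
  rw [h]
  field_simp

end Cdf

theorem kendallPow_cdf_eq_general
    (ν : Measure ℝ) [IsProbabilityMeasure ν] (hν : ν (Set.Iio 0) = 0)
    (α : ℝ) (hα : 0 < α) (n : ℕ) (x : ℝ) (hx : 0 < x) (g' : ℝ)
    (hdiff : HasDerivAt (fun y : ℝ => (williamson α ν (1 / y)) ^ n) g' x)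
    (hcont : ContinuousAt (fun y : ℝ => ((kendallPow α ν n) (Set.Iic y)).toReal) x) :
    ((kendallPow α ν n) (Set.Iic x)).toReal
      = (williamson α ν (1 / x)) ^ n + (x / α) * g' := by
  have hpow : ∀ y, 0 < y →
      williamson α (kendallPow α ν n) (1 / y) = williamson α ν (1 / y) ^ n :=
    fun y hy => williamson_kendallPow hα hν (by positivity) n
  have := isProbabilityMeasure_kendallPow hα hν n
  rw [← hpow x hx]
  exact measureReal_Iic_eq_williamson_add_mul_deriv
    (ae_le_of_measure_Iio_eq_zero (kendallPow_Iio_zero hν n)) hα hx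
    (hdiff.congr_of_eventuallyEq (by filter_upwards [lt_mem_nhds hx] with y hy using hpow y hy))
    hcont

/-- Inversion of the Kendall–Williamson transform: if `G(t) = (Φ_ν(t))^n` and `F_n` is the
cdf of `ν^{△_α n}`, then at every `x > 0` where `x ↦ G(1/x)` is differentiable and `F_n`
is continuous, `F_n(x) = G(1/x) + (x/α) (d/dx)[G(1/x)]`. -/
theorem kendallPow_cdf_eq
    (ν : Measure ℝ) [IsProbabilityMeasure ν] (hν : ν (Set.Iio 0) = 0)
    (α : ℝ) (hα : 0 < α) (n : ℕ) (hn : 2 ≤ n) (x : ℝ) (hx : 0 < x) (g' : ℝ)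
    (hdiff : HasDerivAt (fun y : ℝ => (williamson α ν (1 / y)) ^ n) g' x)
    (hcont : ContinuousAt (fun y : ℝ => ((kendallPow α ν n) (Set.Iic y)).toReal) x) :
    ((kendallPow α ν n) (Set.Iic x)).toReal
      = (williamson α ν (1 / x)) ^ n + (x / α) * g' :=
  kendallPow_cdf_eq_general ν hν α hα n x hx g' hdiff hcont
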